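/- (Homotopically isolated objects detect the scalar) Let R be a commutative ring, 𝒜 an R-linear preadditive category, C and D cochain complexes over 𝒜, and f, g : C ⟶ D chain maps. Fix i ∈ ℤ, an object A of 𝒜, and a morphism ι : A → C^i such that A (via ι) is homotopically isolated with respect to D. Suppose there exist c ∈ R and a chain homotopy between f and c•g, that ι ≫ f^i = ι ≫ g^i, and that the only r ∈ R with r • (ι ≫ g^i) = 0 is r = 0. Then c = 1, and consequently f is homotopic to g. -/
import Mathlib


open CategoryTheory CategoryTheory.Limits

/-- An object `A`, mapping via `ι` into the degree-`i` part of a cochain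
complex `C`, is homotopically isolated with respect to a complex `D` if for
every family of morphisms `h p q : C.X p ⟶ D.X q` (thought of as a homotopy,
only the components `h j (j-1)` being relevant), the composite of `ι` with
the degree-`i` component of `dh + hd` vanishes. -/
def HomotopicallyIsolated {𝒜 : Type*} [Category 𝒜] [Preadditive 𝒜]
    (C D : CochainComplex 𝒜 ℤ) (i : ℤ) {A : 𝒜} (ι : A ⟶ C.X i) : Prop :=
  ∀ h : ∀ p q : ℤ, C.X p ⟶ D.X q,
    ι ≫ (C.d i (i + 1) ≫ h (i + 1) i + h i (i - 1) ≫ D.d (i - 1) i) = 0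

/-- (Homotopically isolated objects detect the scalar) Let `𝒜` be an
`R`-linear preadditive category, `f, g : C ⟶ D` chain maps of cochain
complexes over `𝒜`, and `ι : A ⟶ C.X i` a homotopically isolated object with
respect to `D`. If `f` is homotopic to `c • g` for some `c : R`, `f` and `g`
agree on `A` in degree `i`, and `ι ≫ g.f i` is not annihilated by any nonzero
scalar, then `c = 1` and `f` is homotopic to `g`. -/
theorem homotopically_isolated_detects_scalar
    {R : Type*} [CommRing R] {𝒜 : Type*} [Category 𝒜] [Preadditive 𝒜]
    [CategoryTheory.Linear R 𝒜]
    (C D : CochainComplex 𝒜 ℤ) (f g : C ⟶ D)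
    (i : ℤ) (A : 𝒜) (ι : A ⟶ C.X i)
    (hiso : HomotopicallyIsolated C D i ι)
    (c : R) (hfg : Nonempty (Homotopy f (c • g)))
    (hagree : ι ≫ f.f i = ι ≫ g.f i)
    (hreg : ∀ r : R, r • (ι ≫ g.f i) = 0 → r = 0) :
    c = 1 ∧ Nonempty (Homotopy f g) := by
  obtain ⟨H⟩ := hfg
  have hd : dNext i H.hom = C.d i (i + 1) ≫ H.hom (i + 1) i :=
    dNext_eq H.hom (by simp)
  have hp : prevD i H.hom = H.hom i (i - 1) ≫ D.d (i - 1) i :=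
    prevD_eq H.hom (by simp)
  have hcomm := H.comm i
  have key : ι ≫ f.f i = c • (ι ≫ g.f i) := by
    have h0 := hiso H.hom
    rw [hcomm, hd, hp]
    rw [Preadditive.comp_add, h0, zero_add]
    show ι ≫ (c • g.f i) = c • (ι ≫ g.f i)
    rw [Linear.comp_smul]
  have hc : c = 1 := by
    have : (c - 1) • (ι ≫ g.f i) = 0 := by
      rw [sub_smul, one_smul, ← key, hagree, sub_self]
    exact sub_eq_zero.mp (hreg _ this)
  subst hc
  refine ⟨rfl, ⟨?_⟩⟩
  rw [show (1 : R) • g = g from one_smul R g] at H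
  exact H
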